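/- If an expansion pre-proof with merges P reduces in one merge-reduction step to P', then validity of Dp(P) implies validity of Dp(P'): there is a variable renaming σ such that Dp(P)σ propositionally implies Dp(P'). -/
import Mathlib


/-! Common development: expansion trees with cut (after Hetzl & Weller,
"Expansion Trees with Cut"). -/

/-- First-order terms (constants, variables, binary application). -/
inductive Tm : Type
  | var (n : ℕ)
  | const (c : ℕ)
  | app (f g : Tm)
deriving DecidableEq

instance : Inhabited Tm := ⟨.var 0⟩

def Tm.subst (σ : ℕ → Tm) : Tm → Tm
  | .var n => σ n
  | .const c => .const c
  | .app f g => .app (f.subst σ) (g.subst σ)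

def Tm.fv : Tm → Finset ℕ
  | .var n => {n}
  | .const _ => ∅
  | .app f g => f.fv ∪ g.fv

def Tm.toVar : Tm → ℕ
  | .var n => n
  | _ => 0

/-- The substitution `[x\t]`. -/
def sub1 (x : ℕ) (t : Tm) : ℕ → Tm := fun n => if n = x then t else .var n

/-- Protect a bound variable `x` in a simultaneous substitution. -/
def protect (x : ℕ) (σ : ℕ → Tm) : ℕ → Tm := fun n => if n = x then .var x else σ n

/-- First-order formulas in negation normal form. -/
inductive Fm : Type
  | bot | top
  | pos (p : ℕ) (t : Tm)
  | neg (p : ℕ) (t : Tm)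
  | and (A B : Fm)
  | or (A B : Fm)
  | all (x : ℕ) (A : Fm)
  | ex (x : ℕ) (A : Fm)
deriving DecidableEq

instance : Inhabited Fm := ⟨.bot⟩

/-- De Morgan dual. -/
def Fm.dual : Fm → Fm
  | .bot => .top
  | .top => .bot
  | .pos p t => .neg p t
  | .neg p t => .pos p t
  | .and A B => .or A.dual B.dual
  | .or A B => .and A.dual B.dual
  | .all x A => .ex x A.dual
  | .ex x A => .all x A.dual

def Fm.subst (σ : ℕ → Tm) : Fm → Fm
  | .bot => .bot
  | .top => .top
  | .pos p t => .pos p (t.subst σ)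
  | .neg p t => .neg p (t.subst σ)
  | .and A B => .and (A.subst σ) (B.subst σ)
  | .or A B => .or (A.subst σ) (B.subst σ)
  | .all x A => .all x (A.subst (protect x σ))
  | .ex x A => .ex x (A.subst (protect x σ))

def Fm.subst1 (A : Fm) (x : ℕ) (t : Tm) : Fm := A.subst (sub1 x t)

def Fm.fv : Fm → Finset ℕ
  | .bot => ∅
  | .top => ∅
  | .pos _ t => t.fv
  | .neg _ t => t.fv
  | .and A B => A.fv ∪ B.fv
  | .or A B => A.fv ∪ B.fv
  | .all x A => A.fv.erase x
  | .ex x A => A.fv.erase x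

/-- Quantifier-free formulas. -/
def Fm.qf : Fm → Prop
  | .all _ _ => False
  | .ex _ _ => False
  | .and A B => A.qf ∧ B.qf
  | .or A B => A.qf ∧ B.qf
  | _ => True

/-! ### Semantics -/

structure Model (D : Type) where
  constI : ℕ → D
  appI : D → D → D
  predI : ℕ → D → Prop

def Tm.eval {D : Type} (M : Model D) (ρ : ℕ → D) : Tm → D
  | .var n => ρ n
  | .const c => M.constI c
  | .app f g => M.appI (f.eval M ρ) (g.eval M ρ)

def Fm.eval {D : Type} (M : Model D) (ρ : ℕ → D) : Fm → Prop
  | .bot => False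
  | .top => True
  | .pos p t => M.predI p (t.eval M ρ)
  | .neg p t => ¬ M.predI p (t.eval M ρ)
  | .and A B => A.eval M ρ ∧ B.eval M ρ
  | .or A B => A.eval M ρ ∨ B.eval M ρ
  | .all x A => ∀ d : D, A.eval M (Function.update ρ x d)
  | .ex x A => ∃ d : D, A.eval M (Function.update ρ x d)

/-- Validity in classical first-order logic.  For quantifier-free formulas this
coincides with propositional tautology-hood (atoms interpreted freely). -/
def Fm.Valid (A : Fm) : Prop :=
  ∀ (D : Type) (_ : Nonempty D) (M : Model D) (ρ : ℕ → D), A.eval M ρ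

def orFoldF (l : List Fm) : Fm := l.foldr Fm.or Fm.bot
def andFoldF (l : List Fm) : Fm := l.foldr Fm.and Fm.top

/-! ### Expansion trees (with merges) -/

/-- Expansion trees with merges.  An `∃`-node is represented as a list of
expansions `exCons x A t child rest`; `exNil x A` is the `∃`-node with no
expansions.  `all x A y c` is `∀x A +^y c`.  `merge` is the object-level merge
node `⊔`. -/
inductive ET : Type
  | bot | top
  | lit (pol : Bool) (p : ℕ) (t : Tm)
  | and (a b : ET)
  | or (a b : ET)
  | exNil (x : ℕ) (A : Fm)
  | exCons (x : ℕ) (A : Fm) (t : Tm) (child rest : ET)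
  | all (x : ℕ) (A : Fm) (y : ℕ) (child : ET)
  | merge (a b : ET)
deriving DecidableEq

instance : Inhabited ET := ⟨.bot⟩

/-- The shallow formula of an expansion tree. -/
def ET.Sh : ET → Fm
  | .bot => .bot
  | .top => .top
  | .lit pol p t => if pol then .pos p t else .neg p t
  | .and a b => .and a.Sh b.Sh
  | .or a b => .or a.Sh b.Sh
  | .exNil x A => .ex x A
  | .exCons x A _ _ _ => .ex x A
  | .all x A _ _ => .all x A
  | .merge a _ => a.Sh

/-- The deep formula of an expansion tree. -/
def ET.Dp : ET → Fm
  | .bot => .bot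
  | .top => .top
  | .lit pol p t => if pol then .pos p t else .neg p t
  | .and a b => .and a.Dp b.Dp
  | .or a b => .or a.Dp b.Dp
  | .exNil _ _ => .bot
  | .exCons _ _ _ c r => .or c.Dp r.Dp
  | .all _ _ _ c => c.Dp
  | .merge a b => .or a.Dp b.Dp

/-- The list of eigenvariables of the `∀`-expansions of a tree. -/
def ET.EVlist : ET → List ℕ
  | .bot => []
  | .top => []
  | .lit _ _ _ => []
  | .and a b => a.EVlist ++ b.EVlist
  | .or a b => a.EVlist ++ b.EVlist
  | .exNil _ _ => []
  | .exCons _ _ _ c r => c.EVlist ++ r.EVlist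
  | .all _ _ y c => y :: c.EVlist
  | .merge a b => a.EVlist ++ b.EVlist

def ET.EV (E : ET) : Finset ℕ := E.EVlist.toFinset

/-- All variables occurring anywhere in a tree. -/
def ET.vars : ET → Finset ℕ
  | .bot => ∅
  | .top => ∅
  | .lit _ _ t => t.fv
  | .and a b => a.vars ∪ b.vars
  | .or a b => a.vars ∪ b.vars
  | .exNil x A => insert x A.fv
  | .exCons x A t c r => insert x (A.fv ∪ t.fv ∪ c.vars ∪ r.vars)
  | .all x A y c => insert x (insert y (A.fv ∪ c.vars))
  | .merge a b => a.vars ∪ b.vars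

def ET.MergeFree : ET → Prop
  | .merge _ _ => False
  | .and a b => a.MergeFree ∧ b.MergeFree
  | .or a b => a.MergeFree ∧ b.MergeFree
  | .exCons _ _ _ c r => c.MergeFree ∧ r.MergeFree
  | .all _ _ _ c => c.MergeFree
  | _ => True

/-- A tree containing only literals and propositional connectives. -/
def ET.propOnly : ET → Prop
  | .bot => True
  | .top => True
  | .lit _ _ _ => True
  | .and a b => a.propOnly ∧ b.propOnly
  | .or a b => a.propOnly ∧ b.propOnly
  | _ => False

/-- The list of all subtrees (including the tree itself). -/
def ET.subtrees : ET → List ET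
  | .bot => [.bot]
  | .top => [.top]
  | .lit pol p t => [.lit pol p t]
  | .and a b => .and a b :: (a.subtrees ++ b.subtrees)
  | .or a b => .or a b :: (a.subtrees ++ b.subtrees)
  | .exNil x A => [.exNil x A]
  | .exCons x A t c r => .exCons x A t c r :: (c.subtrees ++ r.subtrees)
  | .all x A y c => .all x A y c :: c.subtrees
  | .merge a b => .merge a b :: (a.subtrees ++ b.subtrees)

/-- Shape of an `∃`-node (a list of expansions). -/
def ET.isExShape : ET → Prop
  | .exNil _ _ => True
  | .exCons _ _ _ _ r => r.isExShape
  | _ => False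

/-- The expansions `(t_i, E_i)` of an `∃`-node. -/
def ET.exps : ET → List (Tm × ET)
  | .exCons _ _ t c r => (t, c) :: r.exps
  | _ => []

/-- The expansion terms of an `∃`-node. -/
def ET.exTerms : ET → List Tm
  | .exCons _ _ t _ r => t :: r.exTerms
  | _ => []

/-- Does the tree contain any expansion (quantifier node with an instance)? -/
def ET.hasExp : ET → Prop
  | .and a b => a.hasExp ∨ b.hasExp
  | .or a b => a.hasExp ∨ b.hasExp
  | .merge a b => a.hasExp ∨ b.hasExp
  | .exCons _ _ _ _ _ => True
  | .all _ _ _ _ => True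
  | _ => False

/-- Substitution on expansion trees (eigenvariables must be mapped to
variables; non-variable images are truncated by `Tm.toVar`). -/
def ET.subst (σ : ℕ → Tm) : ET → ET
  | .bot => .bot
  | .top => .top
  | .lit pol p t => .lit pol p (t.subst σ)
  | .and a b => .and (a.subst σ) (b.subst σ)
  | .or a b => .or (a.subst σ) (b.subst σ)
  | .exNil x A => .exNil x (A.subst (protect x σ))
  | .exCons x A t c r => .exCons x (A.subst (protect x σ)) (t.subst σ) (c.subst σ) (r.subst σ)
  | .all x A y c => .all x (A.subst (protect x σ)) (σ y).toVar (c.subst σ)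
  | .merge a b => .merge (a.subst σ) (b.subst σ)

/-- Renaming of variables in an expansion tree. -/
def ET.ren (ρ : ℕ → ℕ) (E : ET) : ET := E.subst (fun n => Tm.var (ρ n))

/-- Maximal rank `rk` of an expansion occurring in the tree, where
`rk(w) = max{rk(u) : w dominates u} + 1`. -/
def ET.maxRk : ET → ℕ
  | .and a b => max a.maxRk b.maxRk
  | .or a b => max a.maxRk b.maxRk
  | .merge a b => max a.maxRk b.maxRk
  | .exCons _ _ _ c r => max (c.maxRk + 1) r.maxRk
  | .all _ _ _ c => c.maxRk + 1
  | _ => 0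

/-- Number of `∀`-expansions of rank exactly `r` in the tree. -/
def ET.countAllRk (r : ℕ) : ET → ℕ
  | .and a b => ET.countAllRk r a + ET.countAllRk r b
  | .or a b => ET.countAllRk r a + ET.countAllRk r b
  | .merge a b => ET.countAllRk r a + ET.countAllRk r b
  | .exCons _ _ _ c rest => ET.countAllRk r c + ET.countAllRk r rest
  | .all _ _ _ c => (if c.maxRk + 1 = r then 1 else 0) + ET.countAllRk r c
  | _ => 0

/-- The rank of an expansion node (`∀`- or `∃`-expansion). -/
def ET.expRk : ET → ℕ
  | .all _ _ _ c => c.maxRk + 1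
  | .exCons _ _ _ c _ => c.maxRk + 1
  | _ => 0

def IsExpNode (s : ET) : Prop :=
  (∃ x A y c, s = ET.all x A y c) ∨ (∃ x A t c r, s = ET.exCons x A t c r)

/-- Well-formed expansion trees (with merges): the syntactic conditions of
Definition 1 resp. of trees with merges. -/
inductive ET.WF : ET → Prop
  | bot : ET.WF .bot
  | top : ET.WF .top
  | lit {pol p t} : ET.WF (.lit pol p t)
  | and {a b} : ET.WF a → ET.WF b → ET.WF (.and a b)
  | or {a b} : ET.WF a → ET.WF b → ET.WF (.or a b)
  | exNil {x A} : ET.WF (.exNil x A)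
  | exCons {x A t c r} : ET.WF c → ET.WF r → c.Sh = A.subst1 x t →
      r.Sh = .ex x A → r.isExShape → ET.WF (.exCons x A t c r)
  | all {x A y c} : ET.WF c → c.Sh = A.subst1 x (.var y) → ET.WF (.all x A y c)
  | merge {a b} : ET.WF a → ET.WF b → a.Sh = b.Sh → ET.WF (.merge a b)

/-! ### Cuts and (pre-)proofs -/

/-- A cut: a pair of expansion trees with dual shallow formulas. -/
structure Cut where
  pos : ET
  neg : ET
deriving DecidableEq

instance : Inhabited Cut := ⟨⟨.bot, .top⟩⟩

def Cut.Sh (C : Cut) : Fm := C.pos.Sh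
def Cut.Dp (C : Cut) : Fm := .and C.pos.Dp C.neg.Dp
def Cut.maxRk (C : Cut) : ℕ := max C.pos.maxRk C.neg.maxRk
def Cut.WFdual (C : Cut) : Prop := C.neg.Sh = C.pos.Sh.dual

/-- An expansion pre-proof: a set of cuts and a set of expansion trees. -/
structure PreProof where
  cuts : List Cut
  trees : List ET
deriving DecidableEq

def PreProof.allTrees (P : PreProof) : List ET :=
  P.trees ++ P.cuts.map Cut.pos ++ P.cuts.map Cut.neg

def PreProof.Sh (P : PreProof) : List Fm := P.trees.map ET.Sh

def PreProof.dpList (P : PreProof) : List Fm := P.trees.map ET.Dp ++ P.cuts.map Cut.Dp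

/-- The deep sequent of a pre-proof, as a single disjunction. -/
def PreProof.dpDisj (P : PreProof) : Fm := orFoldF P.dpList

/-- `Dp(P)` is a tautology. -/
def PreProof.DeepValid (P : PreProof) : Prop := P.dpDisj.Valid

def PreProof.EVlist (P : PreProof) : List ℕ :=
  (P.allTrees.map ET.EVlist).foldr (· ++ ·) []

def PreProof.EV (P : PreProof) : Finset ℕ := P.EVlist.toFinset

def PreProof.vars (P : PreProof) : Finset ℕ :=
  (P.allTrees.map ET.vars).foldr (· ∪ ·) ∅

def PreProof.MergeFree (P : PreProof) : Prop := ∀ E ∈ P.allTrees, E.MergeFree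

def PreProof.CutFree (P : PreProof) : Prop := P.cuts = []

/-- One step of the dependency relation `<^0`, expressed on eigenvariables
(`a ≺ b` holds iff the corresponding edge between the `∀`-expansion `q(a)`
resp. an `∃`-expansion with term containing `a`, resp. a cut whose cut-formula
contains `a`, and the `∀`-expansion `q(b)` exists; cycles of `<_P` correspond
exactly to cycles of this relation). -/
def PreProof.Dep0 (P : PreProof) (a b : ℕ) : Prop :=
  (∃ E ∈ P.allTrees, ∃ x A c, (ET.all x A a c) ∈ E.subtrees ∧ b ∈ c.EV)
  ∨ (∃ E ∈ P.allTrees, ∃ x A t c r, (ET.exCons x A t c r) ∈ E.subtrees ∧ a ∈ t.fv ∧ b ∈ c.EV)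
  ∨ (∃ C ∈ P.cuts, a ∈ (Cut.Sh C).fv ∧ (b ∈ C.pos.EV ∨ b ∈ C.neg.EV))

/-- The dependency relation `<_P` (transitive closure of `<^0`). -/
def PreProof.Dep (P : PreProof) : ℕ → ℕ → Prop := Relation.TransGen P.Dep0

def PreProof.Acyclic (P : PreProof) : Prop := ∀ a, ¬ P.Dep a a

/-- Expansion pre-proof conditions (well-formedness, dual cuts, pairwise
distinct formulas, regularity, closed end-sequent). -/
structure IsPreProof (P : PreProof) : Prop where
  wf : ∀ E ∈ P.allTrees, E.WF
  cutsDual : ∀ C ∈ P.cuts, C.neg.Sh = C.pos.Sh.dual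
  cutShNodup : (P.cuts.map Cut.Sh).Nodup
  shNodup : P.Sh.Nodup
  regular : P.EVlist.Nodup
  closed : ∀ A ∈ P.Sh, A.fv = ∅

/-- Expansion proofs: pre-proofs with acyclic dependency relation and
tautological deep sequent. -/
structure IsProof (P : PreProof) extends IsPreProof P : Prop where
  acyclic : P.Acyclic
  deepValid : P.DeepValid

def PreProof.mapSubst (σ : ℕ → Tm) (P : PreProof) : PreProof :=
  ⟨P.cuts.map (fun C => ⟨C.pos.subst σ, C.neg.subst σ⟩), P.trees.map (ET.subst σ)⟩

def PreProof.ren (ρ : ℕ → ℕ) (P : PreProof) : PreProof :=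
  P.mapSubst (fun n => Tm.var (ρ n))

/-- Rank of an expansion proof: maximal rank of a critical expansion. -/
def PreProof.rk (P : PreProof) : ℕ := (P.cuts.map Cut.maxRk).foldr max 0

/-- `o(P,r)`: the number of critical `∀`-expansions of rank `r`. -/
def PreProof.ord (P : PreProof) (r : ℕ) : ℕ :=
  (P.cuts.map (fun C => ET.countAllRk r C.pos + ET.countAllRk r C.neg)).foldr (· + ·) 0

/-- `∨∧`-normality: no cut decomposes a disjunction against a conjunction. -/
def OrAndNormal (P : PreProof) : Prop :=
  ∀ C ∈ P.cuts, ∀ a b c d : ET,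
    ¬(C.pos = .or a b ∧ C.neg = .and c d) ∧ ¬(C.pos = .and a b ∧ C.neg = .or c d)

/-- Admissibility of a substitution for a pre-proof. -/
def PreProof.Admissible (σ : ℕ → Tm) (P : PreProof) : Prop :=
  (∀ α ∈ P.EV, ∃ v, σ α = Tm.var v) ∧
  (∀ α ∈ P.EV, ∀ β ∈ (σ α).fv,
    ∀ E ∈ P.allTrees, ∀ x A t c r, (ET.exCons x A t c r) ∈ E.subtrees → α ∈ t.fv →
      ¬(β ∈ c.EV ∨ ∃ γ ∈ c.EV, P.Dep γ β))

/-! ### Merge reduction -/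

/-- `Extract t E c r`: the `∃`-node `E` has an expansion with term `t` and
child `c`, and `r` is `E` with that expansion removed. -/
inductive Extract : Tm → ET → ET → ET → Prop
  | head {x A t c r} : Extract t (.exCons x A t c r) c r
  | tail {x A s d t r c' r'} : Extract t r c' r' →
      Extract t (.exCons x A s d r) c' (.exCons x A s d r')

/-- One merge-reduction step on a tree; the second component records the
global eigenvariable renaming induced by the step (rule for `∀`-nodes). -/
inductive MRed : ET → (ℕ → ℕ) → ET → Prop
  | litm {pol p t} : MRed (.merge (.lit pol p t) (.lit pol p t)) id (.lit pol p t)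
  | botm : MRed (.merge .bot .bot) id .bot
  | topm : MRed (.merge .top .top) id .top
  | andm {a b c d} : MRed (.merge (.and a b) (.and c d)) id (.and (.merge a c) (.merge b d))
  | orm {a b c d} : MRed (.merge (.or a b) (.or c d)) id (.or (.merge a c) (.merge b d))
  | allm {x A y1 y2 c1 c2} :
      MRed (.merge (.all x A y1 c1) (.all x A y2 c2)) (fun n => if n = y2 then y1 else n)
        (ET.ren (fun n => if n = y2 then y1 else n) (.all x A y1 (.merge c1 c2)))
  | exNilL {x A E} : MRed (.merge (.exNil x A) E) id E
  | exNilR {x A E} : MRed (.merge E (.exNil x A)) id E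
  | exHit {x A t c1 r1 E2 c2 r2} : Extract t E2 c2 r2 →
      MRed (.merge (.exCons x A t c1 r1) E2) id (.exCons x A t (.merge c1 c2) (.merge r1 r2))
  | exMiss {x A t c1 r1 E2} : t ∉ E2.exTerms →
      MRed (.merge (.exCons x A t c1 r1) E2) id (.exCons x A t c1 (.merge r1 E2))
  | candL {a b ρ a'} : MRed a ρ a' → MRed (.and a b) ρ (.and a' (b.ren ρ))
  | candR {a b ρ b'} : MRed b ρ b' → MRed (.and a b) ρ (.and (a.ren ρ) b')
  | corL {a b ρ a'} : MRed a ρ a' → MRed (.or a b) ρ (.or a' (b.ren ρ))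
  | corR {a b ρ b'} : MRed b ρ b' → MRed (.or a b) ρ (.or (a.ren ρ) b')
  | cexC {x A t c r ρ c'} : MRed c ρ c' →
      MRed (.exCons x A t c r) ρ
        (.exCons x (A.subst (protect x (fun n => Tm.var (ρ n)))) (t.subst (fun n => Tm.var (ρ n))) c' (r.ren ρ))
  | cexR {x A t c r ρ r'} : MRed r ρ r' →
      MRed (.exCons x A t c r) ρ
        (.exCons x (A.subst (protect x (fun n => Tm.var (ρ n)))) (t.subst (fun n => Tm.var (ρ n))) (c.ren ρ) r')
  | callC {x A y c ρ c'} : MRed c ρ c' →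
      MRed (.all x A y c) ρ (.all x (A.subst (protect x (fun n => Tm.var (ρ n)))) (ρ y) c')
  | cmergeL {a b ρ a'} : MRed a ρ a' → MRed (.merge a b) ρ (.merge a' (b.ren ρ))
  | cmergeR {a b ρ b'} : MRed b ρ b' → MRed (.merge a b) ρ (.merge (a.ren ρ) b')

/-- One merge-reduction step on a pre-proof: a step in one of its trees, with
the induced renaming applied globally. -/
inductive PMStep : PreProof → PreProof → Prop
  | tree (P : PreProof) (i : ℕ) (ρ : ℕ → ℕ) (E' : ET)
      (hi : i < P.trees.length) (h : MRed (P.trees.getD i default) ρ E') :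
      PMStep P ⟨(P.ren ρ).cuts, ((P.ren ρ).trees).set i E'⟩
  | cutPos (P : PreProof) (i : ℕ) (ρ : ℕ → ℕ) (E' : ET)
      (hi : i < P.cuts.length) (h : MRed ((P.cuts.getD i default).pos) ρ E') :
      PMStep P ⟨((P.ren ρ).cuts).set i ⟨E', ((P.cuts.getD i default).neg).ren ρ⟩, (P.ren ρ).trees⟩
  | cutNeg (P : PreProof) (i : ℕ) (ρ : ℕ → ℕ) (E' : ET)
      (hi : i < P.cuts.length) (h : MRed ((P.cuts.getD i default).neg) ρ E') :
      PMStep P ⟨((P.ren ρ).cuts).set i ⟨((P.cuts.getD i default).pos).ren ρ, E'⟩, (P.ren ρ).trees⟩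

def PMStar : PreProof → PreProof → Prop := Relation.ReflTransGen PMStep

/-- Merge-normality: no merge-reduction step applies. -/
def MNormal (P : PreProof) : Prop := ¬ ∃ Q, PMStep P Q

/-- Tree-level merge reduction. -/
def TStep (E E' : ET) : Prop := ∃ ρ, MRed E ρ E'
def TStar : ET → ET → Prop := Relation.ReflTransGen TStep
def TNormal (E : ET) : Prop := ¬ ∃ E', TStep E E'

/-! ### The merge operation on pre-proofs -/

def Cut.omerge (C D : Cut) : Cut := ⟨.merge C.pos D.pos, .merge C.neg D.neg⟩

/-- Insert a cut into a list of cuts, merging it with a cut of equal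
cut-formula if present. -/
def insertCut (C : Cut) : List Cut → List Cut
  | [] => [C]
  | D :: l => if C.Sh = D.Sh then C.omerge D :: l else D :: insertCut C l

def mergeCuts (l m : List Cut) : List Cut := l.foldr insertCut m

/-- The object-level merge `P ⊔ Q` of two pre-proofs with equal shallow
sequents: trees are merged pointwise, cuts with equal cut-formulas merged. -/
def PreProof.omerge (P Q : PreProof) : PreProof :=
  ⟨mergeCuts P.cuts Q.cuts, List.zipWith ET.merge P.trees Q.trees⟩

/-! ### Cut reduction -/

def orFoldE (l : List ET) : ET := l.foldr ET.or ET.bot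
def andFoldE (l : List ET) : ET := l.foldr ET.and ET.top

/-- The substitution `η;[α\t]` (renaming `η` followed by substituting `t`
for `α`). -/
def tauSub (a : ℕ) (t : Tm) (η : ℕ → ℕ) : ℕ → Tm :=
  fun m => if η m = a then t else Tm.var (η m)

/-- A family of fresh renamings: each `ρ i` renames the eigenvariables `evs`
injectively to variables fresh for `used`, fixes all other variables, and the
images for distinct `i` are disjoint. -/
def FreshFam (evs used : Finset ℕ) (ρ : ℕ → ℕ → ℕ) (n : ℕ) : Prop :=
  ∀ i < n, (∀ m, m ∉ evs → ρ i m = m) ∧ (∀ m ∈ evs, ρ i m ∉ used) ∧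
    Set.InjOn (ρ i) ↑evs ∧ ∀ j < n, i ≠ j → ∀ b1 ∈ evs, ∀ b2 ∈ evs, ρ i b1 ≠ ρ j b2

/-- The pre-proof with merges constructed by the quantifier cut-reduction rule:
`rest ⊔ {E₁∨⋯∨Eₙ, Eη₁[α\t₁]∧⋯∧Eηₙ[α\tₙ]} ⊔ ⨆ᵢ rest ηᵢ[α\tᵢ]`. -/
def quantCombo (rest : PreProof) (E : ET) (a : ℕ) (exps : List (Tm × ET))
    (ρ : ℕ → ℕ → ℕ) : PreProof :=
  let n := exps.length
  let ti : ℕ → Tm := fun i => (exps.getD i default).1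
  let newCut : Cut := ⟨orFoldE (exps.map Prod.snd),
    andFoldE ((List.range n).map (fun i => E.subst (tauSub a (ti i) (ρ i))))⟩
  (List.range n).foldl (fun acc i => acc.omerge (rest.mapSubst (tauSub a (ti i) (ρ i))))
    ⟨newCut :: rest.cuts, rest.trees⟩

/-- The cut-reduction steps: atomic, propositional, and quantifier (the latter
in both orientations of the cut pair; the result of the quantifier step is the
merge-normal form of the constructed pre-proof with merges). -/
inductive CutStep : PreProof → PreProof → Prop
  | atomic (l1 l2 : List Cut) (T : List ET) (pol : Bool) (p : ℕ) (t : Tm) :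
      CutStep ⟨l1 ++ ⟨.lit pol p t, .lit (!pol) p t⟩ :: l2, T⟩ ⟨l1 ++ l2, T⟩
  | prop (l1 l2 : List Cut) (T : List ET) (E1 E2 F1 F2 : ET) :
      CutStep ⟨l1 ++ ⟨.or E1 E2, .and F1 F2⟩ :: l2, T⟩
        ⟨l1 ++ ⟨E1, F1⟩ :: ⟨E2, F2⟩ :: l2, T⟩
  | prop2 (l1 l2 : List Cut) (T : List ET) (E1 E2 F1 F2 : ET) :
      CutStep ⟨l1 ++ ⟨.and F1 F2, .or E1 E2⟩ :: l2, T⟩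
        ⟨l1 ++ ⟨F1, E1⟩ :: ⟨F2, E2⟩ :: l2, T⟩
  | quant (l1 l2 : List Cut) (T : List ET) (x : ℕ) (B : Fm) (a : ℕ) (E Epos : ET)
      (ρ : ℕ → ℕ → ℕ) (N : PreProof)
      (hshape : Epos.isExShape)
      (hfresh : FreshFam ((PreProof.mk (l1 ++ l2) T).EV ∪ E.EV)
        ((PreProof.mk (l1 ++ ⟨Epos, .all x B a E⟩ :: l2) T).vars) ρ Epos.exps.length)
      (hstar : PMStar (quantCombo ⟨l1 ++ l2, T⟩ E a Epos.exps ρ) N)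
      (hnorm : MNormal N) :
      CutStep ⟨l1 ++ ⟨Epos, .all x B a E⟩ :: l2, T⟩ N
  | quant2 (l1 l2 : List Cut) (T : List ET) (x : ℕ) (B : Fm) (a : ℕ) (E Epos : ET)
      (ρ : ℕ → ℕ → ℕ) (N : PreProof)
      (hshape : Epos.isExShape)
      (hfresh : FreshFam ((PreProof.mk (l1 ++ l2) T).EV ∪ E.EV)
        ((PreProof.mk (l1 ++ ⟨.all x B a E, Epos⟩ :: l2) T).vars) ρ Epos.exps.length)
      (hstar : PMStar (quantCombo ⟨l1 ++ l2, T⟩ E a Epos.exps ρ) N)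
      (hnorm : MNormal N) :
      CutStep ⟨l1 ++ ⟨.all x B a E, Epos⟩ :: l2, T⟩ N

def CutStar : PreProof → PreProof → Prop := Relation.ReflTransGen CutStep

/-! ### The sequent calculus LK -/

/-- One-sided sequent calculus LK on NNF formulas (sequents as sets, all rules
invertible); the Boolean index is `true` iff the cut rule is allowed. -/
inductive LK : Bool → List Fm → Prop
  | ax {cf : Bool} {Γ : List Fm} {p : ℕ} {t : Tm} :
      Fm.pos p t ∈ Γ → Fm.neg p t ∈ Γ → LK cf Γ
  | andr {cf Γ A B} : Fm.and A B ∈ Γ → LK cf (A :: Γ) → LK cf (B :: Γ) → LK cf Γ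
  | orr {cf Γ A B} : Fm.or A B ∈ Γ → LK cf (A :: B :: Γ) → LK cf Γ
  | allr {cf Γ x A α} : Fm.all x A ∈ Γ → (∀ B ∈ Γ, α ∉ B.fv) →
      LK cf (A.subst1 x (Tm.var α) :: Γ) → LK cf Γ
  | exr {cf Γ x A t} : Fm.ex x A ∈ Γ → LK cf (A.subst1 x t :: Γ) → LK cf Γ
  | cut {Γ A} : LK true (A :: Γ) → LK true (A.dual :: Γ) → LK true Γ

/-! ### Replacement of a subtree (contexts) -/

inductive ReplaceSub (E E' : ET) : ET → ET → Prop
  | here : ReplaceSub E E' E E'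
  | andL {a a' b} : ReplaceSub E E' a a' → ReplaceSub E E' (.and a b) (.and a' b)
  | andR {a b b'} : ReplaceSub E E' b b' → ReplaceSub E E' (.and a b) (.and a b')
  | orL {a a' b} : ReplaceSub E E' a a' → ReplaceSub E E' (.or a b) (.or a' b)
  | orR {a b b'} : ReplaceSub E E' b b' → ReplaceSub E E' (.or a b) (.or a b')
  | mergeL {a a' b} : ReplaceSub E E' a a' → ReplaceSub E E' (.merge a b) (.merge a' b)
  | mergeR {a b b'} : ReplaceSub E E' b b' → ReplaceSub E E' (.merge a b) (.merge a b')
  | exC {x A t c c' r} : ReplaceSub E E' c c' →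
      ReplaceSub E E' (.exCons x A t c r) (.exCons x A t c' r)
  | exR {x A t c r r'} : ReplaceSub E E' r r' →
      ReplaceSub E E' (.exCons x A t c r) (.exCons x A t c r')
  | allC {x A y c c'} : ReplaceSub E E' c c' →
      ReplaceSub E E' (.all x A y c) (.all x A y c')

inductive ReplaceTrees (E E' : ET) : List ET → List ET → Prop
  | head {a a' l} : ReplaceSub E E' a a' → ReplaceTrees E E' (a :: l) (a' :: l)
  | tail {a l l'} : ReplaceTrees E E' l l' → ReplaceTrees E E' (a :: l) (a :: l')

inductive ReplaceCuts (E E' : ET) : List Cut → List Cut → Prop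
  | headPos {C : Cut} {p' : ET} {l} : ReplaceSub E E' C.pos p' →
      ReplaceCuts E E' (C :: l) (⟨p', C.neg⟩ :: l)
  | headNeg {C : Cut} {n' : ET} {l} : ReplaceSub E E' C.neg n' →
      ReplaceCuts E E' (C :: l) (⟨C.pos, n'⟩ :: l)
  | tail {C l l'} : ReplaceCuts E E' l l' → ReplaceCuts E E' (C :: l) (C :: l')

/-- `Q` is obtained from `P` by replacing one occurrence of the subtree `E`
by `E'`. -/
def ReplaceInProof (E E' : ET) (P Q : PreProof) : Prop :=
  (∃ tr', ReplaceTrees E E' P.trees tr' ∧ Q = ⟨P.cuts, tr'⟩) ∨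
  (∃ cs', ReplaceCuts E E' P.cuts cs' ∧ Q = ⟨cs', P.trees⟩)

/-! ### Dual expansions, chains and degree -/

/-- An expansion occurrence: an `∃`-expansion `+^t child` or a
`∀`-expansion `+^y child`. -/
inductive Expansion where
  | ex (t : Tm) (child : ET)
  | uv (y : ℕ) (child : ET)

/-- The rank of an expansion occurrence. -/
def Expansion.rk : Expansion → ℕ
  | .ex _ c => c.maxRk + 1
  | .uv _ c => c.maxRk + 1

/-- `Dual E F w v`: `w` is an expansion of `E` and `v` an expansion of `F`
at dual positions of the common cut-formula. -/
inductive Dual : ET → ET → Expansion → Expansion → Prop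
  | andL {a b c d w v} : Dual a c w v → Dual (.and a b) (.or c d) w v
  | andR {a b c d w v} : Dual b d w v → Dual (.and a b) (.or c d) w v
  | orL {a b c d w v} : Dual a c w v → Dual (.or a b) (.and c d) w v
  | orR {a b c d w v} : Dual b d w v → Dual (.or a b) (.and c d) w v
  | topEA {Epos t c r x B a F} : Extract t Epos c r →
      Dual Epos (.all x B a F) (.ex t c) (.uv a F)
  | topAE {Eneg t c r x B a F} : Extract t Eneg c r →
      Dual (.all x B a F) Eneg (.uv a F) (.ex t c)
  | inEA {Epos t c r x B a F w v} : Extract t Epos c r → Dual c F w v →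
      Dual Epos (.all x B a F) w v
  | inAE {Eneg t c r x B a F w v} : Extract t Eneg c r → Dual F c w v →
      Dual (.all x B a F) Eneg w v

/-- A descending chain of `∀`-expansions (eigenvariables) below `a`. -/
inductive DescChain (P : PreProof) : ℕ → List ℕ → Prop
  | nil (a : ℕ) : DescChain P a []
  | cons {a b : ℕ} {l : List ℕ} : P.Dep b a → DescChain P b l → DescChain P a (b :: l)

/-- `degIs P a d`: the maximal length of a descending chain from the
`∀`-expansion with eigenvariable `a` is `d`. -/
def degIs (P : PreProof) (a : ℕ) (d : ℕ) : Prop :=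
  (∃ l, DescChain P a l ∧ l.length = d) ∧ (∀ l, DescChain P a l → l.length ≤ d)

/-! ### Auxiliary lemmas for Statement 5 -/

theorem tm_subst_var (t : Tm) : t.subst (fun n => .var n) = t := by
  induction t <;> simp [Tm.subst, *]

theorem protect_var (x : ℕ) : protect x (fun n => Tm.var n) = fun n => Tm.var n := by
  funext n; unfold protect; split <;> simp_all

theorem fm_subst_var (A : Fm) : A.subst (fun n => .var n) = A := by
  induction A <;> simp [Fm.subst, protect_var, tm_subst_var, *]

theorem dp_subst (E : ET) (σ : ℕ → Tm) : (E.subst σ).Dp = E.Dp.subst σ := by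
  induction E with
  | lit pol p t => cases pol <;> simp [ET.subst, ET.Dp, Fm.subst]
  | _ => simp_all [ET.subst, ET.Dp, Fm.subst]

theorem cut_dp_subst (C : Cut) (σ : ℕ → Tm) :
    Cut.Dp ⟨C.pos.subst σ, C.neg.subst σ⟩ = (Cut.Dp C).subst σ := by
  simp [Cut.Dp, Fm.subst, dp_subst]

theorem extract_dp {t E c r} (h : Extract t E c r) {D : Type} (M : Model D) (v : ℕ → D) :
    E.Dp.eval M v ↔ c.Dp.eval M v ∨ r.Dp.eval M v := by
  induction h with
  | head => simp [ET.Dp, Fm.eval]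
  | tail _ ih => simp only [ET.Dp, Fm.eval, ih]; tauto

theorem mred_dp {E ρ E'} (h : MRed E ρ E') {D : Type} (M : Model D) (v : ℕ → D)
    (he : (E.Dp.subst (fun n => Tm.var (ρ n))).eval M v) : E'.Dp.eval M v := by
  induction h with
  | litm =>
    rename_i pol p t
    cases pol <;> simp_all [ET.Dp, fm_subst_var, tm_subst_var, Fm.subst, Fm.eval]
  | botm => simp_all [ET.Dp, fm_subst_var, Fm.eval]
  | topm => simp_all [ET.Dp, fm_subst_var, Fm.eval]
  | andm => simp_all [ET.Dp, fm_subst_var, Fm.eval, Fm.subst]; tauto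
  | orm => simp_all [ET.Dp, fm_subst_var, Fm.eval, Fm.subst]; tauto
  | allm => simp_all [ET.Dp, ET.ren, dp_subst, Fm.subst, Fm.eval]
  | exNilL => simp_all [ET.Dp, fm_subst_var, Fm.eval]
  | exNilR => simp_all [ET.Dp, fm_subst_var, Fm.eval]
  | exHit hx =>
    simp_all [ET.Dp, fm_subst_var, Fm.eval, extract_dp hx M v]; tauto
  | exMiss => simp_all [ET.Dp, fm_subst_var, Fm.eval]; tauto
  | candL _ ih => simp_all [ET.Dp, ET.ren, dp_subst, Fm.subst, Fm.eval]
  | candR _ ih => simp_all [ET.Dp, ET.ren, dp_subst, Fm.subst, Fm.eval]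
  | corL _ ih => simp_all [ET.Dp, ET.ren, dp_subst, Fm.subst, Fm.eval]; tauto
  | corR _ ih => simp_all [ET.Dp, ET.ren, dp_subst, Fm.subst, Fm.eval]; tauto
  | cexC _ ih => simp_all [ET.Dp, ET.ren, dp_subst, Fm.subst, Fm.eval]; tauto
  | cexR _ ih => simp_all [ET.Dp, ET.ren, dp_subst, Fm.subst, Fm.eval]; tauto
  | callC _ ih => simp_all [ET.Dp, ET.ren, dp_subst, Fm.subst, Fm.eval]
  | cmergeL _ ih => simp_all [ET.Dp, ET.ren, dp_subst, Fm.subst, Fm.eval]; tauto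
  | cmergeR _ ih => simp_all [ET.Dp, ET.ren, dp_subst, Fm.subst, Fm.eval]; tauto

theorem orFoldF_eval (l : List Fm) {D : Type} (M : Model D) (v : ℕ → D) :
    (orFoldF l).eval M v ↔ ∃ A ∈ l, A.eval M v := by
  induction l with
  | nil => simp [orFoldF, Fm.eval]
  | cons a l ih =>
    show (Fm.or a (orFoldF l)).eval M v ↔ _
    simp [Fm.eval, ih]

theorem orFoldF_subst (l : List Fm) (σ : ℕ → Tm) :
    (orFoldF l).subst σ = orFoldF (l.map (·.subst σ)) := by
  induction l with
  | nil => rfl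
  | cons a l ih => show Fm.subst σ (.or a (orFoldF l)) = _; simp [Fm.subst, ih]; rfl

theorem tm_eval_subst (t : Tm) (σ : ℕ → Tm) {D : Type} (M : Model D) (v : ℕ → D) :
    (t.subst σ).eval M v = t.eval M (fun n => (σ n).eval M v) := by
  induction t <;> simp [Tm.subst, Tm.eval, *]

theorem fm_eval_subst_qf (A : Fm) (hA : A.qf) (σ : ℕ → Tm) {D : Type} (M : Model D)
    (v : ℕ → D) : (A.subst σ).eval M v ↔ A.eval M (fun n => (σ n).eval M v) := by
  induction A <;> simp_all [Fm.subst, Fm.eval, Fm.qf, tm_eval_subst]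

theorem dp_qf (E : ET) : E.Dp.qf := by
  induction E with
  | lit pol p t => cases pol <;> simp [ET.Dp, Fm.qf]
  | _ => simp_all [ET.Dp, Fm.qf]

theorem dpDisj_qf (P : PreProof) : P.dpDisj.qf := by
  have : ∀ A ∈ P.dpList, A.qf := by
    intro A hA
    rcases List.mem_append.mp hA with h | h
    · obtain ⟨E, _, rfl⟩ := List.mem_map.mp h; exact dp_qf E
    · obtain ⟨C, _, rfl⟩ := List.mem_map.mp h
      exact ⟨dp_qf _, dp_qf _⟩
  unfold PreProof.dpDisj
  revert this
  generalize P.dpList = l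
  induction l with
  | nil => intro; trivial
  | cons a l ih =>
    intro h
    exact ⟨h a (by simp), ih fun A hA => h A (List.mem_cons_of_mem _ hA)⟩

theorem valid_subst_qf (A : Fm) (h : A.qf) (hv : A.Valid) (σ : ℕ → Tm) :
    (A.subst σ).Valid :=
  fun D hD M v => (fm_eval_subst_qf A h σ M v).mpr (hv D hD M _)

theorem mem_of_getElem' {α} {l : List α} {i : ℕ} {a : α} (h : i < l.length)
    (he : l[i] = a) : a ∈ l := he ▸ List.getElem_mem h

/-- a single merge-reduction step preserves validity of the deep
sequent; indeed there is a variable renaming `ρ` such that `Dp(P)ρ`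
(propositionally) implies `Dp(P')`. -/
theorem stmt5 (P P' : PreProof) (h : PMStep P P') :
    (∃ ρ : ℕ → ℕ, ∀ (D : Type) (_ : Nonempty D) (M : Model D) (v : ℕ → D),
      (P.dpDisj.subst (fun n => Tm.var (ρ n))).eval M v → P'.dpDisj.eval M v) ∧
    (P.DeepValid → P'.DeepValid) := by
  have main : ∃ ρ : ℕ → ℕ, ∀ (D : Type) (_ : Nonempty D) (M : Model D) (v : ℕ → D),
      (P.dpDisj.subst (fun n => Tm.var (ρ n))).eval M v → P'.dpDisj.eval M v := by
    cases h with
    | tree i ρ E' hi hred =>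
      refine ⟨ρ, fun D hD M v hv => ?_⟩
      set σ : ℕ → Tm := fun n => Tm.var (ρ n) with hσ
      rw [PreProof.dpDisj, orFoldF_subst, orFoldF_eval] at hv
      rw [PreProof.dpDisj, orFoldF_eval]
      obtain ⟨A, hA, hAe⟩ := hv
      obtain ⟨B, hB, rfl⟩ := List.mem_map.mp hA
      rcases List.mem_append.mp hB with hB | hB
      · obtain ⟨E, hE, rfl⟩ := List.mem_map.mp hB
        obtain ⟨j, hj, hget⟩ := List.getElem_of_mem hE
        have hjlen : j < (((P.ren ρ).trees).set i E').length := by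
          simpa [PreProof.ren, PreProof.mapSubst] using hj
        by_cases hji : j = i
        · subst hji
          refine ⟨E'.Dp, ?_, ?_⟩
          · simp only [PreProof.dpList]
            apply List.mem_append.mpr; left
            apply List.mem_map.mpr
            refine ⟨E', ?_, rfl⟩
            have := List.getElem_set_self (l := (P.ren ρ).trees) (i := j) (a := E')
              (h := hjlen)
            exact mem_of_getElem' hjlen this
          · have hEd : P.trees.getD j default = E := by
              rw [List.getD_eq_getElem _ _ hj, hget]
            exact mred_dp hred M v (by rw [hEd]; exact hAe)
        · refine ⟨(E.subst σ).Dp, ?_, ?_⟩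
          · simp only [PreProof.dpList]
            apply List.mem_append.mpr; left
            apply List.mem_map.mpr
            refine ⟨E.subst σ, ?_, rfl⟩
            have h1 : (((P.ren ρ).trees).set i E')[j]'hjlen = (P.ren ρ).trees[j]'(by
                simpa [PreProof.ren, PreProof.mapSubst] using hj) :=
              List.getElem_set_ne (fun hh => hji hh.symm) _
            have h2 : (P.ren ρ).trees[j]'(by
                simpa [PreProof.ren, PreProof.mapSubst] using hj) = E.subst σ := by
              simp only [PreProof.ren, PreProof.mapSubst]
              rw [List.getElem_map]
              rw [hget]
            exact mem_of_getElem' hjlen (h1.trans h2)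
          · rw [dp_subst]; exact hAe
      · obtain ⟨C, hC, rfl⟩ := List.mem_map.mp hB
        refine ⟨Cut.Dp ⟨C.pos.subst σ, C.neg.subst σ⟩, ?_, ?_⟩
        · simp only [PreProof.dpList]
          apply List.mem_append.mpr; right
          apply List.mem_map.mpr
          refine ⟨⟨C.pos.subst σ, C.neg.subst σ⟩, ?_, rfl⟩
          simp only [PreProof.ren, PreProof.mapSubst]
          exact List.mem_map.mpr ⟨C, hC, rfl⟩
        · rw [cut_dp_subst]; exact hAe
    | cutPos i ρ E' hi hred =>
      refine ⟨ρ, fun D hD M v hv => ?_⟩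
      set σ : ℕ → Tm := fun n => Tm.var (ρ n) with hσ
      rw [PreProof.dpDisj, orFoldF_subst, orFoldF_eval] at hv
      rw [PreProof.dpDisj, orFoldF_eval]
      obtain ⟨A, hA, hAe⟩ := hv
      obtain ⟨B, hB, rfl⟩ := List.mem_map.mp hA
      rcases List.mem_append.mp hB with hB | hB
      · obtain ⟨E, hE, rfl⟩ := List.mem_map.mp hB
        refine ⟨(E.subst σ).Dp, ?_, ?_⟩
        · simp only [PreProof.dpList]
          apply List.mem_append.mpr; left
          apply List.mem_map.mpr
          refine ⟨E.subst σ, ?_, rfl⟩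
          simp only [PreProof.ren, PreProof.mapSubst]
          exact List.mem_map.mpr ⟨E, hE, rfl⟩
        · rw [dp_subst]; exact hAe
      · obtain ⟨C, hC, rfl⟩ := List.mem_map.mp hB
        obtain ⟨j, hj, hget⟩ := List.getElem_of_mem hC
        have hjlen : j < (((P.ren ρ).cuts).set i
            ⟨E', ((P.cuts.getD i default).neg).ren ρ⟩).length := by
          simpa [PreProof.ren, PreProof.mapSubst] using hj
        by_cases hji : j = i
        · subst hji
          have hCd : P.cuts.getD j default = C := by
            rw [List.getD_eq_getElem _ _ hj, hget]
          refine ⟨Cut.Dp ⟨E', C.neg.ren ρ⟩, ?_, ?_⟩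
          · simp only [PreProof.dpList]
            apply List.mem_append.mpr; right
            apply List.mem_map.mpr
            refine ⟨⟨E', C.neg.ren ρ⟩, ?_, rfl⟩
            rw [hCd] at hjlen ⊢
            have := List.getElem_set_self (l := (P.ren ρ).cuts) (i := j)
              (a := (⟨E', C.neg.ren ρ⟩ : Cut)) (h := hjlen)
            exact mem_of_getElem' hjlen this
          · simp only [Cut.Dp, Fm.subst, Fm.eval] at hAe ⊢
            refine ⟨?_, ?_⟩
            · exact mred_dp hred M v (by rw [hCd]; exact hAe.1)
            · rw [ET.ren, dp_subst]; exact hAe.2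
        · refine ⟨Cut.Dp ⟨C.pos.subst σ, C.neg.subst σ⟩, ?_, ?_⟩
          · simp only [PreProof.dpList]
            apply List.mem_append.mpr; right
            apply List.mem_map.mpr
            refine ⟨⟨C.pos.subst σ, C.neg.subst σ⟩, ?_, rfl⟩
            have h1 := List.getElem_set_ne (l := (P.ren ρ).cuts)
              (a := (⟨E', ((P.cuts.getD i default).neg).ren ρ⟩ : Cut))
              (fun hh => hji hh.symm) hjlen
            have h2 : (P.ren ρ).cuts[j]'(by
                simpa [PreProof.ren, PreProof.mapSubst] using hj) =
                ⟨C.pos.subst σ, C.neg.subst σ⟩ := by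
              simp only [PreProof.ren, PreProof.mapSubst]
              rw [List.getElem_map]
              rw [hget]
            exact mem_of_getElem' hjlen (h1.trans h2)
          · rw [cut_dp_subst]; exact hAe
    | cutNeg i ρ E' hi hred =>
      refine ⟨ρ, fun D hD M v hv => ?_⟩
      set σ : ℕ → Tm := fun n => Tm.var (ρ n) with hσ
      rw [PreProof.dpDisj, orFoldF_subst, orFoldF_eval] at hv
      rw [PreProof.dpDisj, orFoldF_eval]
      obtain ⟨A, hA, hAe⟩ := hv
      obtain ⟨B, hB, rfl⟩ := List.mem_map.mp hA
      rcases List.mem_append.mp hB with hB | hB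
      · obtain ⟨E, hE, rfl⟩ := List.mem_map.mp hB
        refine ⟨(E.subst σ).Dp, ?_, ?_⟩
        · simp only [PreProof.dpList]
          apply List.mem_append.mpr; left
          apply List.mem_map.mpr
          refine ⟨E.subst σ, ?_, rfl⟩
          simp only [PreProof.ren, PreProof.mapSubst]
          exact List.mem_map.mpr ⟨E, hE, rfl⟩
        · rw [dp_subst]; exact hAe
      · obtain ⟨C, hC, rfl⟩ := List.mem_map.mp hB
        obtain ⟨j, hj, hget⟩ := List.getElem_of_mem hC
        have hjlen : j < (((P.ren ρ).cuts).set i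
            ⟨((P.cuts.getD i default).pos).ren ρ, E'⟩).length := by
          simpa [PreProof.ren, PreProof.mapSubst] using hj
        by_cases hji : j = i
        · subst hji
          have hCd : P.cuts.getD j default = C := by
            rw [List.getD_eq_getElem _ _ hj, hget]
          refine ⟨Cut.Dp ⟨C.pos.ren ρ, E'⟩, ?_, ?_⟩
          · simp only [PreProof.dpList]
            apply List.mem_append.mpr; right
            apply List.mem_map.mpr
            refine ⟨⟨C.pos.ren ρ, E'⟩, ?_, rfl⟩
            rw [hCd] at hjlen ⊢
            have := List.getElem_set_self (l := (P.ren ρ).cuts) (i := j)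
              (a := (⟨C.pos.ren ρ, E'⟩ : Cut)) (h := hjlen)
            exact mem_of_getElem' hjlen this
          · simp only [Cut.Dp, Fm.subst, Fm.eval] at hAe ⊢
            refine ⟨?_, ?_⟩
            · rw [ET.ren, dp_subst]; exact hAe.1
            · exact mred_dp hred M v (by rw [hCd]; exact hAe.2)
        · refine ⟨Cut.Dp ⟨C.pos.subst σ, C.neg.subst σ⟩, ?_, ?_⟩
          · simp only [PreProof.dpList]
            apply List.mem_append.mpr; right
            apply List.mem_map.mpr
            refine ⟨⟨C.pos.subst σ, C.neg.subst σ⟩, ?_, rfl⟩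
            have h1 := List.getElem_set_ne (l := (P.ren ρ).cuts)
              (a := (⟨((P.cuts.getD i default).pos).ren ρ, E'⟩ : Cut))
              (fun hh => hji hh.symm) hjlen
            have h2 : (P.ren ρ).cuts[j]'(by
                simpa [PreProof.ren, PreProof.mapSubst] using hj) =
                ⟨C.pos.subst σ, C.neg.subst σ⟩ := by
              simp only [PreProof.ren, PreProof.mapSubst]
              rw [List.getElem_map]
              rw [hget]
            exact mem_of_getElem' hjlen (h1.trans h2)
          · rw [cut_dp_subst]; exact hAe
  refine ⟨main, fun hv => ?_⟩
  obtain ⟨ρ, himp⟩ := main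
  intro D hD M v
  exact himp D hD M v (valid_subst_qf _ (dpDisj_qf P) hv _ D hD M v)
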